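/- For fixed positive reals t₁, t₂, the limit as n → ∞ of (1/(n log n)) · ∫_0^1 ∑_{k=1}^{⌊n t₁⌋} ∑_{ℓ=1}^{⌊n t₂⌋} a^{|k-ℓ|} da equals 2 min(t₁, t₂). -/

import Mathlib

open Finset Filter MeasureTheory Topology

/-!
Integrating termwise, `∫₀¹ a ^ |k - ℓ| da = 1 / (|k - ℓ| + 1)`, so for `m ≤ M` the double sum is
`∑_{k ≤ m} (H_k + H_{M-k+1} - 1)` with `H` the harmonic numbers. By `log (j + 1) ≤ H_j ≤ 1 + log j`
and `∑_{k ≤ m} H_k = (m + 1) H_m - m` it lies between `2 m log m - 3 m` and `m (2 log M + 1)`.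
With `m ≈ n min t₁ t₂` and `M ≈ n max t₁ t₂`, both bounds are `2 m log n (1 + o(1))`.
-/

theorem sum_Icc_natAbs_sub {β : Type*} [AddCommMonoid β] (g : ℕ → β) {k M : ℕ}
    (hk : k ∈ Icc 1 M) :
    ∑ ℓ ∈ Icc 1 M, g ((k : ℤ) - ℓ).natAbs
      = ∑ j ∈ range k, g j + ∑ j ∈ range (M - k), g (j + 1) := by
  rw [mem_Icc] at hk
  rw [← zero_add 1, Icc_add_one_left_eq_Ioc, ← sum_Ioc_consecutive _ (Nat.zero_le k) hk.2]
  congr 1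
  · refine sum_nbij' (k - ·) (k - ·) ?_ ?_ ?_ ?_ ?_ <;> intro ℓ hℓ <;> simp at hℓ ⊢ <;>
      first | omega | congr 1; omega
  · refine sum_nbij' (· - k - 1) (· + k + 1) ?_ ?_ ?_ ?_ ?_ <;> intro ℓ hℓ <;> simp at hℓ ⊢ <;>
      first | omega | congr 1; omega

def toeplitzHarmonicSum (m M : ℕ) : ℚ :=
  ∑ k ∈ Icc 1 m, ∑ ℓ ∈ Icc 1 M, ((((k : ℤ) - ℓ).natAbs + 1 : ℕ) : ℚ)⁻¹

theorem sum_Icc_inv_natAbs_sub_add_one {k M : ℕ} (hk : k ∈ Icc 1 M) :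
    ∑ ℓ ∈ Icc 1 M, ((((k : ℤ) - ℓ).natAbs + 1 : ℕ) : ℚ)⁻¹
      = harmonic k + harmonic (M - k + 1) - 1 := by
  rw [sum_Icc_natAbs_sub (fun j => ((j + 1 : ℕ) : ℚ)⁻¹) hk, harmonic, harmonic, sum_range_succ']
  simp only [Nat.cast_add, Nat.cast_one, zero_add, inv_one]
  ring

theorem sum_Icc_harmonic (m : ℕ) :
    ∑ k ∈ Icc 1 m, harmonic k = (m + 1) * harmonic m - m := by
  induction m with
  | zero => simp
  | succ m ih =>
    rw [sum_Icc_succ_top (by omega), ih, harmonic_succ]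
    push_cast
    field_simp
    ring

theorem sum_Icc_harmonic_reflect (m : ℕ) :
    ∑ k ∈ Icc 1 m, harmonic (m - k + 1) = ∑ k ∈ Icc 1 m, harmonic k :=
  sum_nbij' (fun k => m + 1 - k) (fun k => m + 1 - k) (by simp; omega) (by simp; omega)
    (by simp; omega) (by simp; omega) (fun k hk => by congr 1; simp at hk; omega)

theorem toeplitzHarmonicSum_comm (m M : ℕ) :
    toeplitzHarmonicSum m M = toeplitzHarmonicSum M m := by
  rw [toeplitzHarmonicSum, sum_comm]
  simp_rw [← Int.natAbs_neg ((_ : ℤ) - _), neg_sub]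
  rfl

theorem toeplitzHarmonicSum_eq_sum_harmonic {m M : ℕ} (h : m ≤ M) :
    toeplitzHarmonicSum m M = ∑ k ∈ Icc 1 m, (harmonic k + harmonic (M - k + 1) - 1) :=
  sum_congr rfl fun _ hk =>
    sum_Icc_inv_natAbs_sub_add_one (Icc_subset_Icc_right h hk)

theorem toeplitzHarmonicSum_self (m : ℕ) :
    toeplitzHarmonicSum m m = 2 * (m + 1) * harmonic m - 3 * m := by
  rw [toeplitzHarmonicSum_eq_sum_harmonic le_rfl, sum_sub_distrib, sum_add_distrib,
    sum_Icc_harmonic_reflect, sum_Icc_harmonic]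
  simp only [sum_const, Nat.card_Icc, add_tsub_cancel_right, nsmul_eq_mul, mul_one]
  ring

theorem toeplitzHarmonicSum_mono_right {m M M' : ℕ} (h : M ≤ M') :
    toeplitzHarmonicSum m M ≤ toeplitzHarmonicSum m M' :=
  sum_le_sum fun _ _ => sum_le_sum_of_subset_of_nonneg (Icc_subset_Icc_right h)
    fun _ _ _ => by positivity

theorem integral_Icc_zero_one_pow (j : ℕ) :
    ∫ a in Set.Icc (0 : ℝ) 1, a ^ j = ((j + 1 : ℕ) : ℝ)⁻¹ := by
  rw [integral_Icc_eq_integral_Ioc, ← intervalIntegral.integral_of_le zero_le_one, integral_pow]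
  simp

theorem integral_sum_sum_pow_natAbs (m M : ℕ) :
    ∫ a in Set.Icc (0 : ℝ) 1, ∑ k ∈ Icc 1 m, ∑ ℓ ∈ Icc 1 M, a ^ ((k : ℤ) - ℓ).natAbs
      = toeplitzHarmonicSum m M := by
  have hint (j : ℕ) : IntegrableOn (fun a : ℝ => a ^ j) (Set.Icc 0 1) :=
    (continuous_pow j).integrableOn_Icc
  rw [integral_finsetSum _ fun _ _ => integrable_finsetSum _ fun _ _ => hint _]
  simp_rw [integral_finsetSum _ fun _ _ => hint _, integral_Icc_zero_one_pow, toeplitzHarmonicSum]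
  push_cast
  rfl

theorem toeplitzHarmonicSum_le {m M : ℕ} (h : m ≤ M) :
    (toeplitzHarmonicSum m M : ℝ) ≤ m * (2 * Real.log M + 1) := by
  have hH (j : ℕ) (hj : j ∈ Icc 1 M) : (harmonic j : ℝ) ≤ 1 + Real.log M := by
    rw [mem_Icc] at hj
    refine (harmonic_le_one_add_log j).trans ?_
    gcongr
    · exact_mod_cast hj.1
    · exact_mod_cast hj.2
  rw [toeplitzHarmonicSum_eq_sum_harmonic h]
  push_cast
  calc _ ≤ ∑ k ∈ Icc 1 m, (2 * Real.log M + 1) := sum_le_sum fun k hk => by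
        rw [mem_Icc] at hk
        linarith [hH k (by simp; omega), hH (M - k + 1) (by simp; omega)]
    _ = _ := by
      simp only [sum_const, Nat.card_Icc, add_tsub_cancel_right, nsmul_eq_mul]

theorem le_toeplitzHarmonicSum {m M : ℕ} (h : m ≤ M) :
    2 * m * Real.log m - 3 * m ≤ (toeplitzHarmonicSum m M : ℝ) := by
  have hH : Real.log m ≤ harmonic m := by
    simpa using log_le_harmonic_floor (m : ℝ) m.cast_nonneg
  have hH₀ : (0 : ℝ) ≤ harmonic m :=
    (Real.log_natCast_nonneg _).trans (log_add_one_le_harmonic m)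
  calc 2 * m * Real.log m - 3 * m ≤ ((2 * (m + 1) * harmonic m - 3 * m : ℚ) : ℝ) := by
        push_cast
        nlinarith [mul_le_mul_of_nonneg_left hH (Nat.cast_nonneg (α := ℝ) m)]
    _ = toeplitzHarmonicSum m m := by rw [toeplitzHarmonicSum_self]
    _ ≤ toeplitzHarmonicSum m M := by exact_mod_cast toeplitzHarmonicSum_mono_right h

theorem tendsto_natFloor_mul_div {t : ℝ} (ht : 0 ≤ t) :
    Tendsto (fun n : ℕ => (⌊(n : ℝ) * t⌋₊ : ℝ) / n) atTop (𝓝 t) :=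
  ((tendsto_nat_floor_mul_div_atTop ht).comp tendsto_natCast_atTop_atTop).congr fun n => by
    simp [mul_comm]

theorem tendsto_inv_log_natCast : Tendsto (fun n : ℕ => (Real.log n)⁻¹) atTop (𝓝 0) :=
  (Real.tendsto_log_atTop.comp tendsto_natCast_atTop_atTop).inv_tendsto_atTop

theorem tendsto_log_div_log_of_tendsto_div {u : ℕ → ℕ} {t : ℝ} (ht : 0 < t)
    (hu : Tendsto (fun n => (u n : ℝ) / n) atTop (𝓝 t)) :
    Tendsto (fun n => Real.log (u n) / Real.log n) atTop (𝓝 1) := by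
  have key := (((Real.continuousAt_log ht.ne').tendsto.comp hu).mul
    tendsto_inv_log_natCast).add_const 1
  rw [mul_zero, zero_add] at key
  refine key.congr' ?_
  filter_upwards [hu.eventually (eventually_gt_nhds ht), eventually_ge_atTop 2] with n hun hn
  have hn₀ : (0 : ℝ) < n := Nat.cast_pos.2 (by omega)
  have hlog : Real.log n ≠ 0 := (Real.log_pos (by exact_mod_cast hn)).ne'
  have hu₀ : (u n : ℝ) ≠ 0 := fun h => by simp [h] at hun
  simp only [Function.comp_apply]
  rw [Real.log_div hu₀ hn₀.ne']
  field_simp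
  ring

theorem tendsto_toeplitzHarmonicSum {u v : ℕ → ℕ} {s t : ℝ} (hs : 0 < s) (ht : 0 < t)
    (huv : ∀ n, u n ≤ v n) (hu : Tendsto (fun n => (u n : ℝ) / n) atTop (𝓝 s))
    (hv : Tendsto (fun n => (v n : ℝ) / n) atTop (𝓝 t)) :
    Tendsto (fun n : ℕ => 1 / (n * Real.log n) * (toeplitzHarmonicSum (u n) (v n) : ℝ))
      atTop (𝓝 (2 * s)) := by
  have hlower := hu.mul (((tendsto_log_div_log_of_tendsto_div hs hu).const_mul 2).sub
    (tendsto_inv_log_natCast.const_mul 3))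
  have hupper := hu.mul (((tendsto_log_div_log_of_tendsto_div ht hv).const_mul 2).add
    tendsto_inv_log_natCast)
  rw [show s * (2 * 1 - 3 * 0) = 2 * s by ring] at hlower
  rw [show s * (2 * 1 + 0) = 2 * s by ring] at hupper
  refine tendsto_of_tendsto_of_tendsto_of_le_of_le hlower hupper (fun n => ?_) (fun n => ?_)
  · calc _ = 1 / (n * Real.log n) * (2 * u n * Real.log (u n) - 3 * u n) := by ring
      _ ≤ _ := by gcongr; exact le_toeplitzHarmonicSum (huv n)
  · calc _ ≤ 1 / (n * Real.log n) * (u n * (2 * Real.log (v n) + 1)) := by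
          gcongr; exact toeplitzHarmonicSum_le (huv n)
      _ = _ := by ring

theorem integral_double_sum_pow_limit (t₁ t₂ : ℝ) (ht₁ : 0 < t₁) (ht₂ : 0 < t₂) :
    Tendsto (fun n : ℕ =>
      (1 / (n * Real.log n)) *
        ∫ a in Set.Icc (0 : ℝ) 1,
          ∑ k ∈ Finset.Icc 1 ⌊(n : ℝ) * t₁⌋₊, ∑ ℓ ∈ Finset.Icc 1 ⌊(n : ℝ) * t₂⌋₊,
            a ^ (((k : ℤ) - ℓ).natAbs))
      atTop (nhds (2 * min t₁ t₂)) := by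
  simp only [integral_sum_sum_pow_natAbs]
  wlog h : t₁ ≤ t₂ generalizing t₁ t₂
  · simpa only [min_comm, toeplitzHarmonicSum_comm] using this t₂ t₁ ht₂ ht₁ (le_of_not_ge h)
  rw [min_eq_left h]
  exact tendsto_toeplitzHarmonicSum ht₁ ht₂ (fun n => Nat.floor_le_floor (by gcongr))
    (tendsto_natFloor_mul_div ht₁.le) (tendsto_natFloor_mul_div ht₂.le)
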